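/- For every l ≥ 0, the space of ℝ³-valued polynomial vector fields of total degree ≤ l on ℝ³ decomposes as a direct sum ℛ^l ⊕ ℛ^{c,l}, where ℛ^l = { curl w : w ℝ³-valued polynomial field of degree ≤ l+1 } and ℛ^{c,l} = { x q : q scalar polynomial of degree ≤ l−1 }. -/

import Mathlib

open MvPolynomial

/-- ℝ³-valued polynomial vector fields with components of total degree ≤ l. -/
noncomputable def polyVec3 (l : ℕ) : Submodule ℝ (Fin 3 → MvPolynomial (Fin 3) ℝ) :=
  Submodule.pi Set.univ fun _ => MvPolynomial.restrictTotalDegree (Fin 3) ℝ l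

/-- Curl of a polynomial vector field on ℝ³. -/
noncomputable def pcurl3 (w : Fin 3 → MvPolynomial (Fin 3) ℝ) :
    Fin 3 → MvPolynomial (Fin 3) ℝ :=
  ![MvPolynomial.pderiv 1 (w 2) - MvPolynomial.pderiv 2 (w 1),
    MvPolynomial.pderiv 2 (w 0) - MvPolynomial.pderiv 0 (w 2),
    MvPolynomial.pderiv 0 (w 1) - MvPolynomial.pderiv 1 (w 0)]

/-- ℛ^l = curls of ℝ³-valued polynomial fields of degree ≤ l+1. -/
noncomputable def Rsp3 (l : ℕ) : Submodule ℝ (Fin 3 → MvPolynomial (Fin 3) ℝ) :=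
  Submodule.span ℝ {v | ∃ w : Fin 3 → MvPolynomial (Fin 3) ℝ,
    (∀ i, (w i).totalDegree ≤ l + 1) ∧ v = pcurl3 w}

/-- The coordinate vector x = (x₁, x₂, x₃) as a polynomial vector field. -/
noncomputable def xvec3 : Fin 3 → MvPolynomial (Fin 3) ℝ := ![X 0, X 1, X 2]

/-- ℛ^{c,l} = x 𝒫^{l−1}(ℝ³) (reduced to {0} when l = 0). -/
noncomputable def Rcsp3 (l : ℕ) : Submodule ℝ (Fin 3 → MvPolynomial (Fin 3) ℝ) :=
  Submodule.span ℝ {v | ∃ q : MvPolynomial (Fin 3) ℝ,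
    q.totalDegree + 1 ≤ l ∧ v = fun i => xvec3 i * q}

/-!
For a field `v` whose components are homogeneous of degree `r`, the identity
`curl (v × x) + x div v = (r + 2) v` puts `v` in `ℛ^l + ℛ^{c,l}`; splitting an
arbitrary field into homogeneous parts gives the sum. For the intersection, `div curl = 0`,
while on the degree-`t` part of `q` the operator `q ↦ div (x q) = 3 q + Σᵢ xᵢ ∂ᵢ q` is
multiplication by `t + 3` (Euler's identity), hence injective.
-/

namespace MvPolynomial

variable {R σ : Type*}

theorem totalDegree_pderiv_le [CommSemiring R] (i : σ) (p : MvPolynomial σ R) :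
    (pderiv i p).totalDegree ≤ p.totalDegree - 1 := by
  classical
  refine Finset.sup_le fun m hm => ?_
  have hcoeff : coeff (m + Finsupp.single i 1) p ≠ 0 := by
    intro h
    rw [mem_support_iff, coeff_pderiv, h, zero_mul] at hm
    exact hm rfl
  have := le_totalDegree (mem_support_iff.mpr hcoeff)
  rw [Finsupp.sum_add_index' (fun _ => rfl) (fun _ _ _ => rfl),
    Finsupp.sum_single_index rfl] at this
  omega

theorem IsHomogeneous.pderiv_eq_zero_of_zero [CommSemiring R] {p : MvPolynomial σ R}
    (h : p.IsHomogeneous 0) (i : σ) : pderiv i p = 0 := by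
  rw [← totalDegree_zero_iff_isHomogeneous, totalDegree_eq_zero_iff_eq_C] at h
  rw [h, pderiv_C]

theorem pderiv_comm [CommRing R] (i j : σ) (p : MvPolynomial σ R) :
    pderiv i (pderiv j p) = pderiv j (pderiv i p) := by
  have h : ⁅pderiv i, pderiv j⁆ = (0 : Derivation R (MvPolynomial σ R) (MvPolynomial σ R)) :=
    derivation_ext fun k => by
      classical
      rw [Derivation.commutator_apply]
      simp [pderiv_X, Pi.single_apply, apply_ite]
  have := congr($h p)
  rwa [Derivation.commutator_apply, Derivation.zero_apply, sub_eq_zero] at this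

theorem sum_homogeneousComponent_of_totalDegree_le [CommSemiring R] {p : MvPolynomial σ R}
    {n : ℕ} (h : p.totalDegree ≤ n) :
    ∑ k ∈ Finset.range (n + 1), homogeneousComponent k p = p := by
  conv_rhs => rw [← sum_homogeneousComponent p]
  refine (Finset.sum_subset (Finset.range_subset_range.mpr (by omega)) fun k _ hk => ?_).symm
  exact homogeneousComponent_eq_zero k p (by simpa using hk)

variable [CommSemiring R] [Fintype σ]

theorem homogeneousComponent_sum_X_mul_pderiv (n : ℕ) (p : MvPolynomial σ R) :
    homogeneousComponent n (∑ i, X i * pderiv i p) = n • homogeneousComponent n p := by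
  induction p using MvPolynomial.induction_on' with
  | monomial d r =>
    have h := isHomogeneous_monomial (σ := σ) r (rfl : d.degree = d.degree)
    rw [h.sum_X_mul_pderiv, map_nsmul, homogeneousComponent_of_mem h]
    split_ifs with hn <;> simp [hn]
  | add p q hp hq => simp only [map_add, mul_add, Finset.sum_add_distrib, hp, hq, smul_add]

theorem sum_pderiv_X_mul (p : MvPolynomial σ R) :
    ∑ i, pderiv i (X i * p) = Fintype.card σ • p + ∑ i, X i * pderiv i p := by
  simp [pderiv_X_self, Finset.sum_add_distrib, add_comm]

theorem eq_zero_of_sum_pderiv_X_mul_eq_zero [Nonempty σ] [IsAddTorsionFree R]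
    {p : MvPolynomial σ R} (h : ∑ i, pderiv i (X i * p) = 0) : p = 0 := by
  have hcomp (n : ℕ) : homogeneousComponent n p = 0 := by
    have := congr(homogeneousComponent n $h)
    rw [sum_pderiv_X_mul, map_add, homogeneousComponent_sum_X_mul_pderiv, map_nsmul, ← add_smul,
      map_zero] at this
    exact (smul_eq_zero.mp this).resolve_left (by positivity)
  rw [← sum_homogeneousComponent p]
  exact Finset.sum_eq_zero fun n _ => hcomp n

end MvPolynomial

open Matrix

lemma xvec3_apply (i : Fin 3) : xvec3 i = X i := by
  fin_cases i <;> rfl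

noncomputable def pdiv3 : (Fin 3 → MvPolynomial (Fin 3) ℝ) →ₗ[ℝ] MvPolynomial (Fin 3) ℝ :=
  ∑ i, (pderiv i).toLinearMap ∘ₗ LinearMap.proj i

noncomputable def xvec3Mul : MvPolynomial (Fin 3) ℝ →ₗ[ℝ] (Fin 3 → MvPolynomial (Fin 3) ℝ) :=
  LinearMap.pi fun i => LinearMap.mulLeft ℝ (xvec3 i)

lemma pdiv3_apply (v : Fin 3 → MvPolynomial (Fin 3) ℝ) : pdiv3 v = ∑ i, pderiv i (v i) := by
  simp [pdiv3]

lemma xvec3Mul_apply (q : MvPolynomial (Fin 3) ℝ) (i : Fin 3) : xvec3Mul q i = X i * q := by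
  simp [xvec3Mul, xvec3_apply]

lemma pdiv3_pcurl3 (w : Fin 3 → MvPolynomial (Fin 3) ℝ) : pdiv3 (pcurl3 w) = 0 := by
  simp only [pdiv3_apply, Fin.sum_univ_three, pcurl3, Fin.isValue, cons_val_zero, cons_val_one,
    cons_val, map_sub]
  linear_combination pderiv_comm 0 1 (w 2) - pderiv_comm 0 2 (w 1) + pderiv_comm 1 2 (w 0)

lemma pcurl3_cross_xvec3_add_xvec3Mul_pdiv3 {r : ℕ} {v : Fin 3 → MvPolynomial (Fin 3) ℝ}
    (hv : ∀ i, (v i).IsHomogeneous r) :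
    pcurl3 (v ⨯₃ xvec3) + xvec3Mul (pdiv3 v) = (r + 2) • v := by
  have euler (i : Fin 3) : X 0 * pderiv 0 (v i) + X 1 * pderiv 1 (v i) + X 2 * pderiv 2 (v i)
      = (r : MvPolynomial (Fin 3) ℝ) * v i := by
    simpa [Fin.sum_univ_three, nsmul_eq_mul] using (hv i).sum_X_mul_pderiv
  funext i
  fin_cases i <;>
    simp only [pcurl3, cross_apply, xvec3, xvec3Mul_apply, pdiv3_apply, Fin.sum_univ_three,
      Pi.add_apply, Pi.smul_apply, cons_val, cons_val_zero, cons_val_one, Fin.isValue,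
      Fin.reduceFinMk, map_sub, Derivation.leibniz, smul_eq_mul, pderiv_X_self, pderiv_X_of_ne,
      ne_eq, Fin.reduceEq, not_false_eq_true, nsmul_eq_mul, Nat.cast_add, Nat.cast_ofNat]
  · linear_combination euler 0
  · linear_combination euler 1
  · linear_combination euler 2

lemma totalDegree_cross_xvec3_le {n : ℕ} {v : Fin 3 → MvPolynomial (Fin 3) ℝ}
    (hv : ∀ i, (v i).totalDegree ≤ n) (i : Fin 3) : ((v ⨯₃ xvec3) i).totalDegree ≤ n + 1 := by
  have hmul (a b : Fin 3) : (v a * X b).totalDegree ≤ n + 1 :=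
    (totalDegree_mul _ _).trans (by rw [totalDegree_X]; exact Nat.add_le_add_right (hv a) 1)
  fin_cases i <;> exact (totalDegree_sub _ _).trans (max_le (hmul _ _) (hmul _ _))

lemma mem_polyVec3 {l : ℕ} {v : Fin 3 → MvPolynomial (Fin 3) ℝ} :
    v ∈ polyVec3 l ↔ ∀ i, (v i).totalDegree ≤ l := by
  simp [polyVec3, Submodule.mem_pi, mem_restrictTotalDegree]

lemma pcurl3_mem_polyVec3 {l : ℕ} {w : Fin 3 → MvPolynomial (Fin 3) ℝ}
    (hw : ∀ i, (w i).totalDegree ≤ l + 1) : pcurl3 w ∈ polyVec3 l := by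
  have hderiv (i j : Fin 3) : (pderiv i (w j)).totalDegree ≤ l :=
    (totalDegree_pderiv_le i (w j)).trans (by have := hw j; omega)
  rw [mem_polyVec3]
  intro i
  fin_cases i <;> exact (totalDegree_sub _ _).trans (max_le (hderiv _ _) (hderiv _ _))

lemma xvec3Mul_mem_polyVec3 {l : ℕ} {q : MvPolynomial (Fin 3) ℝ} (hq : q.totalDegree + 1 ≤ l) :
    xvec3Mul q ∈ polyVec3 l := by
  rw [mem_polyVec3]
  intro i
  rw [xvec3Mul_apply]
  exact (totalDegree_mul _ _).trans (by rw [totalDegree_X]; omega)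

lemma Rsp3_le_polyVec3 (l : ℕ) : Rsp3 l ≤ polyVec3 l :=
  Submodule.span_le.mpr fun _ ⟨_, hw, hv⟩ => hv ▸ pcurl3_mem_polyVec3 hw

lemma Rcsp3_le_polyVec3 (l : ℕ) : Rcsp3 l ≤ polyVec3 l :=
  Submodule.span_le.mpr fun _ ⟨_, hq, hv⟩ => hv ▸ xvec3Mul_mem_polyVec3 hq

lemma Rsp3_le_ker_pdiv3 (l : ℕ) : Rsp3 l ≤ LinearMap.ker pdiv3 :=
  Submodule.span_le.mpr fun _ ⟨w, _, hv⟩ => hv ▸ pdiv3_pcurl3 w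

lemma Rcsp3_le_range_xvec3Mul (l : ℕ) : Rcsp3 l ≤ LinearMap.range xvec3Mul :=
  Submodule.span_le.mpr fun _ ⟨q, _, hv⟩ => ⟨q, hv.symm⟩

lemma xvec3Mul_pdiv3_mem_Rcsp3 {l r : ℕ} (hrl : r ≤ l) {v : Fin 3 → MvPolynomial (Fin 3) ℝ}
    (hv : ∀ i, (v i).IsHomogeneous r) : xvec3Mul (pdiv3 v) ∈ Rcsp3 l := by
  rcases r with _ | r
  · have hdiv : pdiv3 v = 0 := by
      simp [pdiv3_apply, fun i => (hv i).pderiv_eq_zero_of_zero i]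
    rw [hdiv, map_zero]
    exact zero_mem _
  · have hdiv : (pdiv3 v).IsHomogeneous r := by
      rw [pdiv3_apply]
      exact IsHomogeneous.sum _ _ _ fun i _ => (hv i).pderiv
    exact Submodule.subset_span ⟨_, by have := hdiv.totalDegree_le; omega, rfl⟩

lemma mem_Rsp3_sup_Rcsp3_of_isHomogeneous {l r : ℕ} (hrl : r ≤ l)
    {v : Fin 3 → MvPolynomial (Fin 3) ℝ} (hv : ∀ i, (v i).IsHomogeneous r) :
    v ∈ Rsp3 l ⊔ Rcsp3 l := by
  have hcurl : pcurl3 (v ⨯₃ xvec3) ∈ Rsp3 l :=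
    Submodule.subset_span ⟨_, totalDegree_cross_xvec3_le fun i =>
      ((hv i).totalDegree_le.trans hrl), rfl⟩
  have hsum := Submodule.add_mem_sup hcurl (xvec3Mul_pdiv3_mem_Rcsp3 hrl hv)
  rw [pcurl3_cross_xvec3_add_xvec3Mul_pdiv3 hv, ← Nat.cast_smul_eq_nsmul ℝ] at hsum
  exact (Submodule.smul_mem_iff _ (by positivity)).mp hsum

lemma polyVec3_le_Rsp3_sup_Rcsp3 (l : ℕ) : polyVec3 l ≤ Rsp3 l ⊔ Rcsp3 l := by
  intro v hv
  rw [mem_polyVec3] at hv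
  have hsum : ∑ r ∈ Finset.range (l + 1), (fun i => homogeneousComponent r (v i)) = v := by
    funext i
    rw [Finset.sum_apply]
    exact sum_homogeneousComponent_of_totalDegree_le (hv i)
  rw [← hsum]
  exact Submodule.sum_mem _ fun r hr =>
    mem_Rsp3_sup_Rcsp3_of_isHomogeneous (Nat.lt_succ_iff.mp (Finset.mem_range.mp hr))
      fun i => homogeneousComponent_isHomogeneous r (v i)

lemma Rsp3_inf_Rcsp3_eq_bot (l : ℕ) : Rsp3 l ⊓ Rcsp3 l = ⊥ := by
  refine eq_bot_iff.mpr fun v ⟨hcurl, hx⟩ => ?_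
  obtain ⟨q, rfl⟩ := Rcsp3_le_range_xvec3Mul l hx
  have hdiv : pdiv3 (xvec3Mul q) = 0 := Rsp3_le_ker_pdiv3 l hcurl
  simp only [pdiv3_apply, xvec3Mul_apply] at hdiv
  rw [eq_zero_of_sum_pderiv_X_mul_eq_zero hdiv, map_zero]
  exact zero_mem _

/-- For every `l ≥ 0`, the ℝ³-valued polynomial fields of degree ≤ l decompose as
the direct sum ℛ^l ⊕ ℛ^{c,l}. -/
theorem polyVec3_eq_curl_directSum_curlComplement (l : ℕ) :
    Rsp3 l ⊔ Rcsp3 l = polyVec3 l ∧ Rsp3 l ⊓ Rcsp3 l = ⊥ :=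
  ⟨le_antisymm (sup_le (Rsp3_le_polyVec3 l) (Rcsp3_le_polyVec3 l)) (polyVec3_le_Rsp3_sup_Rcsp3 l),
    Rsp3_inf_Rcsp3_eq_bot l⟩
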